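/- arXiv:2408.05320 — 2 statements merged into one kernel-verified Lean document; each statement's English description precedes it below -/
import Mathlib

section
/- Let G be a finite DAG with unique source s and sink t satisfying degree equality, and let R be a route in G. Then for every inner vertex v of G − R (i.e., a vertex of G − R other than s, t that is incident to some edge of G − R), there exists a directed path from s to t in G − R passing through v. -/
set_option linter.unusedSectionVars false


open Finset

variable {V : Type*} [DecidableEq V] [Fintype V]

/-- The list of directed edges traversed by a list of vertices. -/
def edgeList (l : List V) : List (V × V) := l.zip l.tail

/-- In-degree of a vertex. -/
def indeg (E : Finset (V × V)) (v : V) : ℕ := (E.filter fun e => e.2 = v).card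

/-- Out-degree of a vertex. -/
def outdeg (E : Finset (V × V)) (v : V) : ℕ := (E.filter fun e => e.1 = v).card

/-- A directed graph with edge set `E` is acyclic: no directed cycle returns to a vertex. -/
def Acyclic (E : Finset (V × V)) : Prop :=
  ∀ (v : V) (l : List V), ¬ List.Chain (fun a b => (a, b) ∈ E) v (l ++ [v])

/-- A route: a directed path from `s` to `t` (with at least one edge), recorded as its
list of vertices. -/
def IsRoute (E : Finset (V × V)) (s t : V) (l : List V) : Prop :=
  l.Chain' (fun a b => (a, b) ∈ E) ∧ l.head? = some s ∧ l.getLast? = some t ∧ 2 ≤ l.length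

/-- A route decomposition: a set of routes with pairwise disjoint edge sets whose union
is the whole edge set `E`. -/
def IsRouteDecomp (E : Finset (V × V)) (s t : V) (R : Finset (List V)) : Prop :=
  (∀ l ∈ R, IsRoute E s t l) ∧
  (∀ l ∈ R, ∀ m ∈ R, l ≠ m → ∀ e, e ∈ edgeList l → e ∉ edgeList m) ∧
  (∀ e ∈ E, ∃ l ∈ R, e ∈ edgeList l)

/-- `s` is the unique source of the graph. -/
def UniqueSource (E : Finset (V × V)) (s : V) : Prop :=
  indeg E s = 0 ∧ ∀ v, indeg E v = 0 → v = s

/-- `t` is the unique sink of the graph. -/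
def UniqueSink (E : Finset (V × V)) (t : V) : Prop :=
  outdeg E t = 0 ∧ ∀ v, outdeg E v = 0 → v = t

/-- Degree equality: indegree equals outdegree at every inner vertex. -/
def DegreeEquality (E : Finset (V × V)) (s t : V) : Prop :=
  ∀ v, v ≠ s → v ≠ t → indeg E v = outdeg E v


lemma edgeList_cons_cons (a b : V) (r : List V) :
    edgeList (a :: b :: r) = (a, b) :: edgeList (b :: r) := rfl

lemma mem_edgeList_fst {l : List V} {e : V × V} (h : e ∈ edgeList l) : e.1 ∈ l := by
  induction l with
  | nil => simp [edgeList] at h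
  | cons a r ih =>
    cases r with
    | nil => simp [edgeList] at h
    | cons b r' =>
      rw [edgeList_cons_cons] at h
      rcases List.mem_cons.1 h with h | h
      · subst h; exact List.mem_cons_self
      · exact List.mem_cons_of_mem _ (ih h)

lemma chain'_mem_edgeList {R : V → V → Prop} {l : List V} (hc : l.Chain' R)
    {e : V × V} (h : e ∈ edgeList l) : R e.1 e.2 := by
  induction l with
  | nil => simp [edgeList] at h
  | cons a r ih =>
    cases r with
    | nil => simp [edgeList] at h
    | cons b r' =>
      rw [edgeList_cons_cons] at h
      rcases List.mem_cons.1 h with h | h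
      · subst h; exact (List.isChain_cons_cons.1 hc).1
      · exact ih hc.tail h

lemma edgeList_nodup {l : List V} (h : l.Nodup) : (edgeList l).Nodup := by
  induction l with
  | nil => simp [edgeList]
  | cons a r ih =>
    cases r with
    | nil => simp [edgeList]
    | cons b r' =>
      rw [edgeList_cons_cons]
      refine List.nodup_cons.2 ⟨fun hmem => ?_, ih (List.nodup_cons.1 h).2⟩
      exact (List.nodup_cons.1 h).1 (mem_edgeList_fst hmem)

lemma acyclic_subset {E F : Finset (V × V)} (h : F ⊆ E) (hA : Acyclic E) : Acyclic F := by
  intro v l hc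
  exact hA v l (List.IsChain.imp (fun a b hab => h hab) hc)

lemma nodup_of_chain' {E : Finset (V × V)} (hA : Acyclic E) {l : List V}
    (hc : l.Chain' (fun a b => (a, b) ∈ E)) : l.Nodup := by
  induction l with
  | nil => simp
  | cons a r ih =>
    refine List.nodup_cons.2 ⟨fun hmem => ?_, ih hc.tail⟩
    obtain ⟨r1, r2, rfl⟩ := List.append_of_mem hmem
    have hpre : (a :: (r1 ++ [a])) <+: a :: (r1 ++ a :: r2) := by
      refine ⟨r2, by simp⟩
    have := hc.prefix hpre
    exact hA a r1 this

/-- counting invariant along a walk -/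
lemma count_inv (v : V) (l : List V) :
    (edgeList l).countP (fun e => decide (e.2 = v)) + (if l.head? = some v then 1 else 0)
    = (edgeList l).countP (fun e => decide (e.1 = v)) + (if l.getLast? = some v then 1 else 0) := by
  induction l with
  | nil => simp [edgeList]
  | cons a r ih =>
    cases r with
    | nil => simp [edgeList]
    | cons b r' =>
      rw [edgeList_cons_cons, List.countP_cons, List.countP_cons, List.getLast?_cons_cons]
      have hh : (a :: b :: r').head? = some a := rfl
      rw [hh]
      have hh2 : (b :: r').head? = some b := rfl
      rw [hh2] at ih
      simp only [decide_eq_true_eq]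
      by_cases hav : a = v <;> by_cases hbv : b = v <;>
        simp [hav, hbv] at ih ⊢ <;> omega

lemma filter_sdiff_deg (E F : Finset (V × V)) (p : V × V → Prop) [DecidablePred p] :
    (E \ F).filter p = E.filter p \ F.filter p := by
  ext e; simp [Finset.mem_filter, Finset.mem_sdiff]; tauto

lemma indeg_sdiff {E F : Finset (V × V)} (h : F ⊆ E) (v : V) :
    indeg (E \ F) v = indeg E v - indeg F v := by
  unfold indeg
  rw [filter_sdiff_deg, Finset.card_sdiff_of_subset (Finset.filter_subset_filter _ h)]

lemma outdeg_sdiff {E F : Finset (V × V)} (h : F ⊆ E) (v : V) :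
    outdeg (E \ F) v = outdeg E v - outdeg F v := by
  unfold outdeg
  rw [filter_sdiff_deg, Finset.card_sdiff_of_subset (Finset.filter_subset_filter _ h)]

lemma indeg_mono {E F : Finset (V × V)} (h : F ⊆ E) (v : V) : indeg F v ≤ indeg E v :=
  Finset.card_le_card (Finset.filter_subset_filter _ h)

lemma outdeg_mono {E F : Finset (V × V)} (h : F ⊆ E) (v : V) : outdeg F v ≤ outdeg E v :=
  Finset.card_le_card (Finset.filter_subset_filter _ h)

lemma toFinset_deg_in {m : List (V × V)} (hm : m.Nodup) (v : V) :
    indeg m.toFinset v = m.countP (fun e => decide (e.2 = v)) := by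
  unfold indeg
  rw [List.countP_eq_length_filter, ← List.toFinset_card_of_nodup (hm.filter _),
    List.toFinset_filter]
  congr 1
  apply Finset.filter_congr
  intro x _
  simp

lemma toFinset_deg_out {m : List (V × V)} (hm : m.Nodup) (v : V) :
    outdeg m.toFinset v = m.countP (fun e => decide (e.1 = v)) := by
  unfold outdeg
  rw [List.countP_eq_length_filter, ← List.toFinset_card_of_nodup (hm.filter _),
    List.toFinset_filter]
  congr 1
  apply Finset.filter_congr
  intro x _
  simp

lemma exists_out_iff (E : Finset (V × V)) (v : V) :
    (∃ w, (v, w) ∈ E) ↔ 0 < outdeg E v := by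
  unfold outdeg
  rw [Finset.card_pos, Finset.filter_nonempty_iff]
  constructor
  · rintro ⟨w, hw⟩; exact ⟨(v, w), hw, rfl⟩
  · rintro ⟨⟨a, b⟩, he, h1⟩; cases h1; exact ⟨b, he⟩

lemma exists_in_iff (E : Finset (V × V)) (v : V) :
    (∃ w, (w, v) ∈ E) ↔ 0 < indeg E v := by
  unfold indeg
  rw [Finset.card_pos, Finset.filter_nonempty_iff]
  constructor
  · rintro ⟨w, hw⟩; exact ⟨(w, v), hw, rfl⟩
  · rintro ⟨⟨a, b⟩, he, h2⟩; cases h2; exact ⟨a, he⟩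

lemma wf_of_acyclic {E : Finset (V × V)} (hA : Acyclic E) :
    WellFounded (fun w v => (v, w) ∈ E) := by
  set r := fun w v : V => (v, w) ∈ E with hr
  have key : ∀ a b, Relation.TransGen r a b →
      ∃ m : List V, List.Chain (fun x y => (x, y) ∈ E) b (m ++ [a]) := by
    intro a b h
    induction h with
    | single h => exact ⟨[], List.Chain.cons h List.Chain.nil⟩
    | tail _ h ih =>
      obtain ⟨m, hm⟩ := ih
      exact ⟨_ :: m, List.Chain.cons h hm⟩
  haveI : IsTrans V (Relation.TransGen r) := inferInstance
  haveI : IsIrrefl V (Relation.TransGen r) := ⟨fun a ha => by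
    obtain ⟨m, hm⟩ := key a a ha
    exact hA a m hm⟩
  exact Subrelation.wf (fun h => Relation.TransGen.single h)
    (Finite.wellFounded_of_trans_of_irrefl _)

lemma exists_path_to_sink (E : Finset (V × V)) (hA : Acyclic E) (t : V)
    (hdeg : ∀ w, w ≠ t → (∃ u, (u, w) ∈ E) → ∃ u, (w, u) ∈ E) :
    ∀ v w, (v, w) ∈ E → ∃ q : List V, q ≠ [] ∧
      List.Chain (fun a b => (a, b) ∈ E) v q ∧ q.getLast? = some t := by
  intro v
  refine (wf_of_acyclic hA).induction
    (C := fun v => ∀ w, (v, w) ∈ E → ∃ q : List V, q ≠ [] ∧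
      List.Chain (fun a b => (a, b) ∈ E) v q ∧ q.getLast? = some t) v ?_
  intro v ih w hvw
  by_cases hwt : w = t
  · exact ⟨[w], by simp, List.Chain.cons hvw List.Chain.nil, by simp [hwt]⟩
  · obtain ⟨u, hwu⟩ := hdeg w hwt ⟨v, hvw⟩
    obtain ⟨q, hq0, hqc, hql⟩ := ih w hvw u hwu
    refine ⟨w :: q, by simp, List.Chain.cons hvw hqc, ?_⟩
    cases q with
    | nil => exact absurd rfl hq0
    | cons c q' => rw [List.getLast?_cons_cons]; exact hql

lemma mem_swap_image {E : Finset (V × V)} {a b : V} :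
    (a, b) ∈ E.image (fun e => (e.2, e.1)) ↔ (b, a) ∈ E := by
  simp only [Finset.mem_image, Prod.ext_iff]
  constructor
  · rintro ⟨⟨x, y⟩, he, h1, h2⟩
    simp at h1 h2; subst h1; subst h2; exact he
  · intro h; exact ⟨(b, a), h, rfl, rfl⟩

lemma acyclic_swap {E : Finset (V × V)} (hA : Acyclic E) :
    Acyclic (E.image (fun e => (e.2, e.1))) := by
  intro v m hch
  have hch' : List.Chain' (fun a b => (a, b) ∈ E.image (fun e => (e.2, e.1)))
      (v :: (m ++ [v])) := hch
  have hrev : List.Chain' (fun a b => (a, b) ∈ E) ((v :: (m ++ [v])).reverse) := by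
    refine List.isChain_reverse.2 ?_
    exact hch'.imp fun a b hab => mem_swap_image.1 hab
  have heq : (v :: (m ++ [v])).reverse = v :: (m.reverse ++ [v]) := by simp
  rw [heq] at hrev
  exact hA v m.reverse hrev


/-- after deleting a route from a DAG with degree equality, every inner
vertex of `G - R` lies on a directed `s`-`t` path of `G - R`. -/
theorem deleteRoute_innerVertex_on_route
    (E : Finset (V × V)) (s t : V)
    (hA : Acyclic E) (hst : s ≠ t)
    (hs : UniqueSource E s) (ht : UniqueSink E t)
    (hDE : DegreeEquality E s t)
    (l : List V) (hl : IsRoute E s t l) :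
    ∀ v : V, v ≠ s → v ≠ t →
      (∃ e ∈ E \ (edgeList l).toFinset, e.1 = v ∨ e.2 = v) →
      ∃ p : List V, IsRoute (E \ (edgeList l).toFinset) s t p ∧ v ∈ p := by
  obtain ⟨hlc, hlh, hlt, hln⟩ := hl
  intro v hvs hvt hex
  set F := (edgeList l).toFinset with hF
  have hFE : F ⊆ E := fun e he => chain'_mem_edgeList hlc (List.mem_toFinset.1 he)
  set E' := E \ F with hE'
  have hE'E : E' ⊆ E := Finset.sdiff_subset
  have hA' : Acyclic E' := acyclic_subset hE'E hA
  have hlnd : l.Nodup := nodup_of_chain' hA hlc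
  have hFnd : (edgeList l).Nodup := edgeList_nodup hlnd
  have hdeg' : ∀ w, w ≠ s → w ≠ t → indeg E' w = outdeg E' w := by
    intro w hws hwt
    have h1 : indeg F w = outdeg F w := by
      rw [hF, toFinset_deg_in hFnd, toFinset_deg_out hFnd]
      have hci := count_inv w l
      rw [hlh, hlt] at hci
      simpa [Ne.symm hws, Ne.symm hwt] using hci
    rw [hE', indeg_sdiff hFE, outdeg_sdiff hFE, hDE w hws hwt, h1]
  have hns : indeg E' s = 0 :=
    Nat.le_zero.1 (le_trans (indeg_mono hE'E s) (le_of_eq hs.1))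
  have hnt : outdeg E' t = 0 :=
    Nat.le_zero.1 (le_trans (outdeg_mono hE'E t) (le_of_eq ht.1))
  have hdegF : ∀ w, w ≠ t → (∃ u, (u, w) ∈ E') → ∃ u, (w, u) ∈ E' := by
    intro w hwt hin
    have hws : w ≠ s := by
      rintro rfl
      have := (exists_in_iff E' w).1 hin
      omega
    rw [exists_out_iff, ← hdeg' w hws hwt, ← exists_in_iff]
    exact hin
  set E'' := E'.image (fun e => (e.2, e.1)) with hE''
  have hA'' : Acyclic E'' := acyclic_swap hA'
  have hdegB : ∀ w, w ≠ s → (∃ u, (u, w) ∈ E'') → ∃ u, (w, u) ∈ E'' := by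
    intro w hws hin
    obtain ⟨u, hu⟩ := hin
    have hu' : (w, u) ∈ E' := mem_swap_image.1 hu
    have hwt : w ≠ t := by
      rintro rfl
      have := (exists_out_iff E' w).1 ⟨u, hu'⟩
      omega
    have : ∃ x, (x, w) ∈ E' := by
      rw [exists_in_iff, hdeg' w hws hwt, ← exists_out_iff]
      exact ⟨u, hu'⟩
    obtain ⟨x, hx⟩ := this
    exact ⟨x, mem_swap_image.2 hx⟩
  obtain ⟨e, heE', hev⟩ := hex
  have hboth : (∃ w, (v, w) ∈ E') ∧ (∃ u, (u, v) ∈ E') := by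
    have hd := hdeg' v hvs hvt
    rcases hev with h | h
    · have hout : ∃ w, (v, w) ∈ E' := ⟨e.2, by obtain ⟨a, b⟩ := e; cases h; exact heE'⟩
      refine ⟨hout, ?_⟩
      rw [exists_in_iff, hd, ← exists_out_iff]
      exact hout
    · have hin : ∃ u, (u, v) ∈ E' := ⟨e.1, by obtain ⟨a, b⟩ := e; cases h; exact heE'⟩
      refine ⟨?_, hin⟩
      rw [exists_out_iff, ← hd, ← exists_in_iff]
      exact hin
  obtain ⟨⟨w, hvw⟩, ⟨u, huv⟩⟩ := hboth
  obtain ⟨qf, hqf0, hqfc, hqft⟩ := exists_path_to_sink E' hA' t hdegF v w hvw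
  obtain ⟨qb, hqb0, hqbc, hqbs⟩ :=
    exists_path_to_sink E'' hA'' s hdegB v u (mem_swap_image.2 huv)
  refine ⟨(v :: qb).reverse ++ qf, ⟨?_, ?_, ?_, ?_⟩, ?_⟩
  · -- chain'
    have hc1 : List.Chain' (fun a b => (a, b) ∈ E') ((v :: qb).reverse) := by
      refine List.isChain_reverse.2 ?_
      have hch : List.Chain' (fun a b => (a, b) ∈ E'') (v :: qb) := hqbc
      exact hch.imp (fun a b hab => mem_swap_image.1 hab)
    cases qf with
    | nil => exact absurd rfl hqf0
    | cons w1 qf' =>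
      obtain ⟨hvw1, hrest⟩ := List.chain_cons.1 hqfc
      refine hc1.append hrest ?_
      intro x hx y hy
      rw [List.getLast?_reverse] at hx
      simp only [List.head?_cons, Option.mem_def, Option.some.injEq] at hx hy
      subst hx; subst hy
      exact hvw1
  · -- head
    rw [List.head?_append_of_ne_nil _ (by simp), List.head?_reverse]
    cases qb with
    | nil => exact absurd rfl hqb0
    | cons b1 qb' => rw [List.getLast?_cons_cons]; exact hqbs
  · -- last
    rw [List.getLast?_append_of_ne_nil _ hqf0]
    exact hqft
  · -- length
    cases qf with
    | nil => exact absurd rfl hqf0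
    | cons w1 qf' => simp; omega
  · -- membership
    simp
end

section
/- Let G be a finite DAG satisfying degree equality with ordered route decomposition R and transversal M = {e_R : R ∈ R}. For each R ∈ R, let R^left be the set of edges of R occurring strictly before e_R along R. Then for every route S of G, the sum of the coordinates of φ(χ_S) indexed by pairs (i, l) with i an inner vertex and l ∈ inlevel(R^left, i) for some R ∈ R equals 1 − |E(S) ∩ M|. In particular, every vertex φ(χ_S) of the projected polytope satisfies the linear inequality (sum of those coordinates) ≤ 1. -/
open Finset

variable {V : Type*} [DecidableEq V] [Fintype V]

/-- The linear projection `φ` associated to an ordered route decomposition `ℛ`. -/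
def phi {k : ℕ} (E : Finset (V × V)) (ℛ : Fin k → List V) (x : V × V → ℝ) :
    V × Fin k → ℝ :=
  fun p =>
    (∑ e ∈ E.filter fun e => e.2 = p.1 ∧ e ∈ edgeList (ℛ p.2), x e) -
      ∑ e ∈ E.filter fun e => e.1 = p.1 ∧ e ∈ edgeList (ℛ p.2), x e

/-- The edges of route `ℛ j` occurring strictly before the chosen transversal edge
`m j` along the route. -/
def leftEdges {k : ℕ} (ℛ : Fin k → List V) (m : Fin k → V × V) (j : Fin k) :
    List (V × V) :=
  (edgeList (ℛ j)).takeWhile fun e => decide (e ≠ m j)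


set_option linter.unusedSectionVars false in
lemma edgeList_cons₂' (a b : V) (l : List V) :
    edgeList (a :: b :: l) = (a, b) :: edgeList (b :: l) := rfl

set_option linter.unusedSectionVars false in
lemma map_fst_edgeList (l : List V) : (edgeList l).map Prod.fst = l.dropLast := by
  match l with
  | [] => rfl
  | [a] => rfl
  | a :: b :: l => rw [edgeList_cons₂', List.map_cons, map_fst_edgeList (b :: l)]; rfl

set_option linter.unusedSectionVars false in
lemma map_snd_edgeList (l : List V) : (edgeList l).map Prod.snd = l.tail := by
  match l with
  | [] => rfl
  | [a] => rfl
  | a :: b :: l => rw [edgeList_cons₂', List.map_cons, map_snd_edgeList (b :: l)]; simp [List.tail]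

set_option linter.unusedSectionVars false in
lemma length_edgeList (l : List V) : (edgeList l).length = l.length - 1 := by
  have := congrArg List.length (map_snd_edgeList l); simpa using this

set_option linter.unusedSectionVars false in
lemma mem_of_chain' {R : V → V → Prop} {l : List V} (h : l.Chain' R) :
    ∀ e ∈ edgeList l, R e.1 e.2 := by
  match l with
  | [] => intro e he; simp [edgeList] at he
  | [a] => intro e he; simp [edgeList] at he
  | a :: b :: l =>
    intro e he
    rw [edgeList_cons₂', List.mem_cons] at he
    rcases he with rfl | he
    · exact (List.isChain_cons_cons.mp h).1
    · exact mem_of_chain' (List.isChain_cons_cons.mp h).2 e he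

set_option linter.unusedSectionVars false in
lemma take_tail' (l : List V) (n : ℕ) : (l.take (n+1)).tail = l.tail.take n := by
  cases l <;> simp

lemma takeWhile_ne_append {α : Type*} [DecidableEq α] (x : α) (l : List α) (hx : x ∈ l) :
    (l.takeWhile (fun e => decide (e ≠ x))) ++ [x] <+: l := by
  induction l with
  | nil => simp at hx
  | cons a l ih =>
    by_cases hax : a = x
    · subst hax
      refine ⟨l, ?_⟩
      simp [List.takeWhile_cons]
    · rcases List.mem_cons.mp hx with h | hx
      · exact absurd h.symm hax
      · obtain ⟨r, hr⟩ := ih hx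
        refine ⟨r, ?_⟩
        simp only [List.takeWhile_cons, hax, decide_eq_true_eq, ne_eq, not_false_iff,
          decide_not]
        simp only [List.takeWhile_cons, ne_eq, hax, not_false_eq_true, decide_eq_true_eq,
          decide_not] at hr ⊢
        rw [if_pos (by simp [hax])]
        simpa using hr

lemma not_mem_of_prefix_getLast {α : Type*} {Q : List α} {x tt : α} {L : List α}
    (hp : Q ++ [x] <+: L) (hn : L.Nodup) (hl : L.getLast? = some tt) : tt ∉ Q := by
  obtain ⟨rest, hrest⟩ := hp
  have hL : L = Q ++ (x :: rest) := by rw [← hrest]; simp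
  subst hL
  have htmem : tt ∈ x :: rest := by
    rw [List.getLast?_append_of_ne_nil _ (by simp)] at hl
    exact List.mem_of_getLast? hl
  exact fun htQ => List.disjoint_of_nodup_append hn htQ htmem

set_option linter.unusedSectionVars false in
/-- Chain' + acyclicity implies the vertex list has no duplicates. -/
lemma chain'_nodup {E : Finset (V × V)} (hA : Acyclic E)
    {l : List V} (h : l.Chain' (fun a b => (a, b) ∈ E)) : l.Nodup := by
  match l with
  | [] => exact List.nodup_nil
  | a :: l =>
    refine List.nodup_cons.mpr ⟨?_, chain'_nodup hA h.tail⟩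
    intro hmem
    obtain ⟨l1, l2, rfl⟩ := List.append_of_mem hmem
    have hpre : (a :: (l1 ++ [a])) <+: (a :: (l1 ++ a :: l2)) := by
      refine ⟨l2, ?_⟩; simp
    have hc : List.Chain' (fun a b => (a, b) ∈ E) (a :: (l1 ++ [a])) := h.prefix hpre
    exact hA a l1 hc

set_option linter.unusedSectionVars false in
lemma route_facts (E : Finset (V × V)) (s t : V)
    (hsrc : ∀ e ∈ E, e.2 ≠ s) (hsink : ∀ e ∈ E, e.1 ≠ t)
    {l : List V} (hr : IsRoute E s t l) (hnd : l.Nodup)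
    {mj : V × V} (hmj : mj ∈ edgeList l) :
    ∀ e ∈ edgeList l,
      ((e.2 ≠ s ∧ e.2 ≠ t ∧ ∃ e' ∈ (edgeList l).takeWhile (fun e' => decide (e' ≠ mj)), e'.2 = e.2)
         ↔ e ∈ (edgeList l).takeWhile (fun e' => decide (e' ≠ mj))) ∧
      ((e.1 ≠ s ∧ e.1 ≠ t ∧ ∃ e' ∈ (edgeList l).takeWhile (fun e' => decide (e' ≠ mj)), e'.2 = e.1)
         ↔ ((e ∈ (edgeList l).takeWhile (fun e' => decide (e' ≠ mj)) ∨ e = mj) ∧ e.1 ≠ s)) ∧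
      (e.1 = s → e ≠ mj → e ∈ (edgeList l).takeWhile (fun e' => decide (e' ≠ mj))) := by
  obtain ⟨hch, hhead, hlast, hlen⟩ := hr
  set P := (edgeList l).takeWhile (fun e' => decide (e' ≠ mj)) with hPdef
  obtain ⟨b, l₁, rfl⟩ : ∃ b l₁, l = s :: b :: l₁ := by
    match l, hhead, hlen with
    | a :: b :: l₁, hhead, _ =>
      exact ⟨b, l₁, by simpa using (by simpa using hhead : a = s) ▸ rfl⟩
  set l : List V := s :: b :: l₁ with hldef
  have hE : ∀ e' ∈ edgeList l, e' ∈ E := mem_of_chain' hch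
  have hP : P <+: edgeList l := List.takeWhile_prefix _
  have hP' : P ++ [mj] <+: edgeList l := takeWhile_ne_append mj _ hmj
  have hndtail : l.tail.Nodup := hnd.sublist (List.tail_sublist l)
  have hfstnd : ((edgeList l).map Prod.fst).Nodup := by
    rw [map_fst_edgeList]; exact hnd.sublist (List.dropLast_sublist l)
  have hsndnd : ((edgeList l).map Prod.snd).Nodup := by
    rw [map_snd_edgeList]; exact hndtail
  have injf := List.inj_on_of_nodup_map hfstnd
  have injs := List.inj_on_of_nodup_map hsndnd
  have hlast_tail : l.tail.getLast? = some t := by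
    rw [hldef] at hlast ⊢
    rwa [List.getLast?_cons_cons] at hlast
  set n := P.length + 1 with hndef
  have hP'take : P ++ [mj] = (edgeList l).take n := by
    have := List.prefix_iff_eq_take.mp hP'
    simpa [hndef] using this
  have hnle : n ≤ (edgeList l).length := by
    have := hP'.length_le
    simpa [hndef] using this
  have hfstP' : (P ++ [mj]).map Prod.fst = l.take n := by
    rw [hP'take, List.map_take, map_fst_edgeList, List.dropLast_eq_take, List.take_take,
      min_eq_left (by rwa [← length_edgeList])]
  have hsndP : P.map Prod.snd = (l.take n).tail := by
    have hPtake : P = (edgeList l).take P.length := List.prefix_iff_eq_take.mp hP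
    rw [hPtake, List.map_take, map_snd_edgeList, hndef, take_tail']
  have hstake : l.take n = s :: (b :: l₁).take (n-1) := by
    rw [hldef, hndef]; simp
  have hsnotin : s ∉ (l.take n).tail := by
    rw [hstake]
    intro hcon
    have : s ∈ b :: l₁ := (List.take_sublist _ _).subset (by simpa using hcon)
    exact (List.nodup_cons.mp (hldef ▸ hnd)).1 this
  intro e he
  refine ⟨⟨?_, ?_⟩, ⟨?_, ?_⟩, ?_⟩
  · rintro ⟨-, -, e', he'P, he'2⟩
    have : e' = e := injs (hP.subset he'P) he he'2
    exact this ▸ he'P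
  · intro heP
    refine ⟨hsrc e (hE e he), ?_, e, heP, rfl⟩
    intro h2t
    have htmem : t ∈ P.map Prod.snd := List.mem_map.mpr ⟨e, heP, h2t⟩
    have hpm : P.map Prod.snd ++ [mj.2] <+: l.tail := by
      have := hP'.map Prod.snd
      simpa [map_snd_edgeList] using this
    exact not_mem_of_prefix_getLast hpm hndtail hlast_tail htmem
  · rintro ⟨h1s, -, e', he'P, he'2⟩
    refine ⟨?_, h1s⟩
    have h1mem : e.1 ∈ (l.take n).tail := by
      rw [← hsndP]; exact List.mem_map.mpr ⟨e', he'P, he'2⟩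
    have h1take : e.1 ∈ l.take n := (List.tail_sublist _).subset h1mem
    rw [← hfstP'] at h1take
    obtain ⟨e'', he''mem, he''1⟩ := List.mem_map.mp h1take
    have : e'' = e := injf (hP'.subset he''mem) he he''1
    subst this
    rcases List.mem_append.mp he''mem with h | h
    · exact Or.inl h
    · exact Or.inr (by simpa using h)
  · rintro ⟨hPmj, h1s⟩
    refine ⟨h1s, hsink e (hE e he), ?_⟩
    have heP' : e ∈ P ++ [mj] := by
      rcases hPmj with h | h
      · exact List.mem_append.mpr (Or.inl h)
      · exact List.mem_append.mpr (Or.inr (by simp [h]))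
    have h1take : e.1 ∈ l.take n := by
      rw [← hfstP']; exact List.mem_map.mpr ⟨e, heP', rfl⟩
    have h1tail : e.1 ∈ (l.take n).tail := by
      rw [hstake] at h1take ⊢
      rcases List.mem_cons.mp h1take with h | h
      · exact absurd h h1s
      · simpa using h
    rw [← hsndP] at h1tail
    obtain ⟨e', he'P, he'2⟩ := List.mem_map.mp h1tail
    exact ⟨e', he'P, he'2⟩
  · intro h1s hne
    match hLd : edgeList l, hmj with
    | e₀ :: rest, _ =>
      have he₀1 : e₀.1 = s := by
        have := map_fst_edgeList l
        rw [hLd, hldef] at this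
        simpa using congrArg List.head? this
      have hee₀ : e = e₀ := by
        refine injf he ?_ (by rw [h1s, he₀1])
        rw [hLd]; exact List.mem_cons_self
      rw [hPdef, hLd, List.takeWhile_cons, if_pos (by simp [hee₀ ▸ hne])]
      exact hee₀ ▸ List.mem_cons_self

/-- for every route `S`, the sum of the coordinates of `φ(χ_S)` over pairs
`(i, l)` with `i` inner and `l ∈ inlevel(R^left, i)` for some `R` of the decomposition
equals `1 - |E(S) ∩ M|`; in particular it is at most `1`. -/
theorem transversal_equation
    (E : Finset (V × V)) (s t : V) (k : ℕ) (ℛ : Fin k → List V)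
    (hA : Acyclic E) (hst : s ≠ t)
    (hs : UniqueSource E s) (ht : UniqueSink E t)
    (hDE : DegreeEquality E s t)
    (hroutes : ∀ i, IsRoute E s t (ℛ i))
    (hdisj : ∀ i j : Fin k, i ≠ j → ∀ e ∈ edgeList (ℛ i), e ∉ edgeList (ℛ j))
    (hcover : ∀ e ∈ E, ∃ i, e ∈ edgeList (ℛ i))
    (m : Fin k → V × V) (hm : ∀ j, m j ∈ edgeList (ℛ j)) :
    ∀ S : List V, IsRoute E s t S →
      (∑ i ∈ Finset.univ.filter fun i : V => i ≠ s ∧ i ≠ t,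
        ∑ l ∈ Finset.univ.filter fun l : Fin k => ∃ e ∈ leftEdges ℛ m l, e.2 = i,
          phi E ℛ (fun e => if e ∈ edgeList S then (1 : ℝ) else 0) (i, l))
        = 1 - ((edgeList S).toFinset ∩ Finset.univ.image m).card ∧
      (∑ i ∈ Finset.univ.filter fun i : V => i ≠ s ∧ i ≠ t,
        ∑ l ∈ Finset.univ.filter fun l : Fin k => ∃ e ∈ leftEdges ℛ m l, e.2 = i,
          phi E ℛ (fun e => if e ∈ edgeList S then (1 : ℝ) else 0) (i, l)) ≤ 1 := by
    classical
  intro S hS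
  have hsrc : ∀ e ∈ E, e.2 ≠ s := by
    intro e he h2
    have hmem : e ∈ E.filter (fun e => e.2 = s) := Finset.mem_filter.mpr ⟨he, h2⟩
    have hcard : (E.filter (fun e => e.2 = s)).card = 0 := hs.1
    rw [Finset.card_eq_zero] at hcard
    rw [hcard] at hmem
    exact absurd hmem (Finset.notMem_empty e)
  have hsink : ∀ e ∈ E, e.1 ≠ t := by
    intro e he h1
    have hmem : e ∈ E.filter (fun e => e.1 = t) := Finset.mem_filter.mpr ⟨he, h1⟩
    have hcard : (E.filter (fun e => e.1 = t)).card = 0 := ht.1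
    rw [Finset.card_eq_zero] at hcard
    rw [hcard] at hmem
    exact absurd hmem (Finset.notMem_empty e)
  have hSE : ∀ e ∈ edgeList S, e ∈ E := mem_of_chain' hS.1
  have hSnd : S.Nodup := chain'_nodup hA hS.1
  have hRnd : ∀ i, (ℛ i).Nodup := fun i => chain'_nodup hA (hroutes i).1
  have huniq : ∀ (e : V × V) (i j : Fin k),
      e ∈ edgeList (ℛ i) → e ∈ edgeList (ℛ j) → i = j := by
    intro e i j hi hj
    by_contra hij
    exact hdisj i j hij e hi hj
  set T := (edgeList S).toFinset with hTdef
  have hTE : ∀ e ∈ T, e ∈ E := fun e he => hSE e (List.mem_toFinset.mp he)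
  -- rewrite phi in terms of sums over T
  have key : ∀ (p : V × V → Prop) (hp : DecidablePred p),
      (∑ e ∈ E.filter (fun e => p e), (if e ∈ edgeList S then (1:ℝ) else 0))
        = ∑ e ∈ T, (if p e then (1:ℝ) else 0) := by
    intro p hp
    rw [← Finset.sum_filter, ← Finset.sum_filter]
    refine Finset.sum_congr ?_ (fun _ _ => rfl)
    ext e
    simp only [Finset.mem_filter, List.mem_toFinset, hTdef]
    constructor
    · rintro ⟨⟨-, hp⟩, hmem⟩; exact ⟨hmem, hp⟩
    · rintro ⟨hmem, hp⟩; exact ⟨⟨hSE e hmem, hp⟩, hmem⟩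
  have phi_eq : ∀ (i : V) (l : Fin k),
      phi E ℛ (fun e => if e ∈ edgeList S then (1:ℝ) else 0) (i, l)
        = ∑ e ∈ T, ((if e.2 = i ∧ e ∈ edgeList (ℛ l) then (1:ℝ) else 0)
            - (if e.1 = i ∧ e ∈ edgeList (ℛ l) then (1:ℝ) else 0)) := by
    intro i l
    rw [Finset.sum_sub_distrib]
    show (∑ e ∈ E.filter fun e => e.2 = i ∧ e ∈ edgeList (ℛ l),
        (if e ∈ edgeList S then (1:ℝ) else 0)) -
      (∑ e ∈ E.filter fun e => e.1 = i ∧ e ∈ edgeList (ℛ l),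
        (if e ∈ edgeList S then (1:ℝ) else 0)) = _
    exact congrArg₂ (· - ·) (key _ inferInstance) (key _ inferInstance)
  -- the big sum, reorganized per edge
  have step1 : (∑ i ∈ Finset.univ.filter fun i : V => i ≠ s ∧ i ≠ t,
        ∑ l ∈ Finset.univ.filter fun l : Fin k => ∃ e ∈ leftEdges ℛ m l, e.2 = i,
          phi E ℛ (fun e => if e ∈ edgeList S then (1 : ℝ) else 0) (i, l))
      = ∑ e ∈ T, ∑ i ∈ Finset.univ.filter fun i : V => i ≠ s ∧ i ≠ t,
          ∑ l ∈ Finset.univ.filter fun l : Fin k => ∃ e' ∈ leftEdges ℛ m l, e'.2 = i,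
            ((if e.2 = i ∧ e ∈ edgeList (ℛ l) then (1:ℝ) else 0)
              - (if e.1 = i ∧ e ∈ edgeList (ℛ l) then (1:ℝ) else 0)) := by
    rw [Finset.sum_congr rfl (fun i _ => Finset.sum_congr rfl (fun l _ => phi_eq i l))]
    rw [Finset.sum_congr rfl (fun i _ => Finset.sum_comm)]
    exact Finset.sum_comm
  -- per-edge evaluation
  have step2 : ∀ e ∈ T,
      (∑ i ∈ Finset.univ.filter fun i : V => i ≠ s ∧ i ≠ t,
          ∑ l ∈ Finset.univ.filter fun l : Fin k => ∃ e' ∈ leftEdges ℛ m l, e'.2 = i,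
            ((if e.2 = i ∧ e ∈ edgeList (ℛ l) then (1:ℝ) else 0)
              - (if e.1 = i ∧ e ∈ edgeList (ℛ l) then (1:ℝ) else 0)))
        = (if e.1 = s then (1:ℝ) else 0)
            - (if e ∈ Finset.univ.image m then (1:ℝ) else 0) := by
    intro e heT
    obtain ⟨j, hj⟩ := hcover e (hTE e heT)
    have claims := route_facts E s t hsrc hsink (hroutes j) (hRnd j) (hm j) e hj
    rw [show ((edgeList (ℛ j)).takeWhile (fun e' => decide (e' ≠ m j))) = leftEdges ℛ m j
      from rfl] at claims
    have hsum : ∀ (v : V),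
        (∑ l ∈ Finset.univ.filter fun l : Fin k => ∃ e' ∈ leftEdges ℛ m l, e'.2 = v,
            (if v = v ∧ e ∈ edgeList (ℛ l) then (1:ℝ) else 0))
          = if (∃ e' ∈ leftEdges ℛ m j, e'.2 = v) then (1:ℝ) else 0 := by
      intro v
      have hpt : ∀ l : Fin k, (if v = v ∧ e ∈ edgeList (ℛ l) then (1:ℝ) else 0)
          = if l = j then (1:ℝ) else 0 := by
        intro l
        by_cases hlj : l = j
        · subst hlj; simp [hj]
        · have hne : e ∉ edgeList (ℛ l) := fun hc => hlj (huniq e l j hc hj)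
          simp [hlj, hne]
      rw [Finset.sum_congr rfl (fun l _ => hpt l), Finset.sum_ite_eq' _ j (fun _ => (1:ℝ))]
      simp
    -- generic evaluation of one of the double sums
    have hdouble : ∀ (w : V),
        (∑ i ∈ Finset.univ.filter fun i : V => i ≠ s ∧ i ≠ t,
          ∑ l ∈ Finset.univ.filter fun l : Fin k => ∃ e' ∈ leftEdges ℛ m l, e'.2 = i,
            (if w = i ∧ e ∈ edgeList (ℛ l) then (1:ℝ) else 0))
          = if (w ≠ s ∧ w ≠ t) ∧ (∃ e' ∈ leftEdges ℛ m j, e'.2 = w) then (1:ℝ) else 0 := by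
      intro w
      have hpt2 : ∀ i ∈ (Finset.univ.filter fun i : V => i ≠ s ∧ i ≠ t),
          (∑ l ∈ Finset.univ.filter fun l : Fin k => ∃ e' ∈ leftEdges ℛ m l, e'.2 = i,
            (if w = i ∧ e ∈ edgeList (ℛ l) then (1:ℝ) else 0))
          = if i = w then (if (∃ e' ∈ leftEdges ℛ m j, e'.2 = w) then (1:ℝ) else 0) else 0 := by
        intro i _
        by_cases hiw : i = w
        · subst hiw; rw [hsum i, if_pos rfl]
        · have : ∀ l : Fin k, (if w = i ∧ e ∈ edgeList (ℛ l) then (1:ℝ) else 0) = 0 := by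
            intro l; rw [if_neg]; rintro ⟨h, -⟩; exact hiw h.symm
          rw [Finset.sum_congr rfl (fun l _ => this l), Finset.sum_const, smul_zero,
            if_neg hiw]
      rw [Finset.sum_congr rfl hpt2,
        Finset.sum_ite_eq' _ w (fun _ => if (∃ e' ∈ leftEdges ℛ m j, e'.2 = w) then (1:ℝ) else 0)]
      by_cases hw : w ≠ s ∧ w ≠ t <;> by_cases hex : ∃ e' ∈ leftEdges ℛ m j, e'.2 = w <;>
        simp [hw, hex]
    rw [Finset.sum_congr rfl (fun i _ => Finset.sum_sub_distrib _ _), Finset.sum_sub_distrib,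
      hdouble e.2, hdouble e.1]
    -- now use the claims
    have hA' : ((e.2 ≠ s ∧ e.2 ≠ t) ∧ (∃ e' ∈ leftEdges ℛ m j, e'.2 = e.2))
        ↔ e ∈ leftEdges ℛ m j := by
      rw [and_assoc]; exact claims.1
    have hB' : ((e.1 ≠ s ∧ e.1 ≠ t) ∧ (∃ e' ∈ leftEdges ℛ m j, e'.2 = e.1))
        ↔ ((e ∈ leftEdges ℛ m j ∨ e = m j) ∧ e.1 ≠ s) := by
      rw [and_assoc]; exact claims.2.1
    have hmjP : m j ∉ leftEdges ℛ m j := by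
      intro hmem
      have := List.mem_takeWhile_imp hmem
      simp at this
    have himage : e ∈ Finset.univ.image m ↔ e = m j := by
      constructor
      · intro hmem
        obtain ⟨i, -, hmi⟩ := Finset.mem_image.mp hmem
        have : e ∈ edgeList (ℛ i) := hmi ▸ hm i
        have hij : i = j := huniq e i j this hj
        rw [← hmi, hij]
      · intro h; exact Finset.mem_image.mpr ⟨j, Finset.mem_univ j, h.symm⟩
    rw [if_congr hA' rfl rfl, if_congr hB' rfl rfl, if_congr himage rfl rfl]
    by_cases hem : e = m j
    · rw [if_neg (by rw [hem]; exact hmjP), if_pos hem]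
      by_cases h1s : e.1 = s
      · rw [if_neg (by rintro ⟨-, h⟩; exact h h1s), if_pos h1s] <;> norm_num
      · rw [if_pos ⟨Or.inr hem, h1s⟩, if_neg h1s] <;> norm_num
    · rw [if_neg hem]
      by_cases h1s : e.1 = s
      · rw [if_pos (claims.2.2 h1s hem), if_neg (by rintro ⟨-, h⟩; exact h h1s), if_pos h1s]
      · by_cases heP : e ∈ leftEdges ℛ m j
        · rw [if_pos heP, if_pos ⟨Or.inl heP, h1s⟩, if_neg h1s] <;> norm_num
        · rw [if_neg heP, if_neg (by rintro ⟨h | h, -⟩; exacts [heP h, hem h]), if_neg h1s]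
  -- final counting
  have step3 : (∑ e ∈ T, ((if e.1 = s then (1:ℝ) else 0)
        - (if e ∈ Finset.univ.image m then (1:ℝ) else 0)))
      = 1 - ((edgeList S).toFinset ∩ Finset.univ.image m).card := by
    rw [Finset.sum_sub_distrib]
    have h2 : (∑ e ∈ T, (if e ∈ Finset.univ.image m then (1:ℝ) else 0))
        = ((edgeList S).toFinset ∩ Finset.univ.image m).card := by
      rw [Finset.sum_boole, Finset.filter_mem_eq_inter]
    have h1 : (∑ e ∈ T, (if e.1 = s then (1:ℝ) else 0)) = 1 := by
      obtain ⟨hch, hhead, hlast, hlen⟩ := hS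
      obtain ⟨b, S₁, rfl⟩ : ∃ b S₁, S = s :: b :: S₁ := by
        match S, hhead, hlen with
        | a :: b :: S₁, hhead, _ =>
          exact ⟨b, S₁, by simpa using (by simpa using hhead : a = s) ▸ rfl⟩
      have hfstnd : ((edgeList (s :: b :: S₁)).map Prod.fst).Nodup := by
        rw [map_fst_edgeList]
        exact hSnd.sublist (List.dropLast_sublist _)
      have injf := List.inj_on_of_nodup_map hfstnd
      have hfilter : T.filter (fun e => e.1 = s) = {(s, b)} := by
        ext e
        simp only [Finset.mem_filter, List.mem_toFinset, Finset.mem_singleton, hTdef]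
        constructor
        · rintro ⟨hmem, h1⟩
          exact injf hmem (by rw [edgeList_cons₂']; exact List.mem_cons_self) h1
        · rintro rfl
          exact ⟨by rw [edgeList_cons₂']; exact List.mem_cons_self, rfl⟩
      rw [Finset.sum_boole, hfilter]
      simp
    rw [h1, h2]
  constructor
  · rw [step1, Finset.sum_congr rfl step2, step3]
  · rw [step1, Finset.sum_congr rfl step2, step3]
    have : (0:ℝ) ≤ ((edgeList S).toFinset ∩ Finset.univ.image m).card := Nat.cast_nonneg _
    linarith
end
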